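/- Let S be a measurable space and let κ₁, κ₂, ..., κ_t be Markov kernels from S to S such that each κ_s satisfies a minorization condition with a common constant δ ∈ (0,1]: there are probability measures ν_s with κ_s(x, A) ≥ δ·ν_s(A) for all x ∈ S and measurable A. Let π be any probability measure on S. Then for every probability measure μ on S, dTV(μ.bind κ₁.bind κ₂ ... .bind κ_t, π) ≤ (1 − δ)^t · dTV(μ, π) + Σ_{s=1}^{t} (1 − δ)^{t−s} · dTV(π.bind κ_s, π), where dTV(μ, ν) = sup over measurable sets A of |μ(A) − ν(A)|. -/

import Mathlib

open MeasureTheory ProbabilityTheory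

/-- The total variation distance between two measures:
`dTV(μ, ν) = sup { |μ(A) - ν(A)| : A measurable }`. -/
noncomputable def tvDist {S : Type*} [MeasurableSpace S] (μ ν : Measure S) : ℝ :=
  ⨆ A : {A : Set S // MeasurableSet A}, |(μ A).toReal - (ν A).toReal|

/-!
Under the minorization `κ x ≥ δ η`, the function `x ↦ κ x A - δ η A` takes values in
`[0, 1 - δ]` and the constant `δ η A` cancels between `μ κ` and `μ' κ`, so by the Hahn
decomposition one step of the chain contracts the total variation distance by `1 - δ`.
The triangle inequality through `π κ_s` then gives
`d_{s+1} ≤ (1 - δ) d_s + dTV(π κ_s, π)` for `d_s = dTV(μ κ₀ ⋯ κ_{s-1}, π)`,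
and unrolling this recursion yields the geometric sum.
-/

section

variable {S : Type*} [MeasurableSpace S]

lemma tvDist_comm (μ ν : Measure S) : tvDist μ ν = tvDist ν μ :=
  iSup_congr fun _ => abs_sub_comm _ _

lemma le_tvDist (μ ν : Measure S) [IsFiniteMeasure μ] [IsFiniteMeasure ν] {A : Set S}
    (hA : MeasurableSet A) : |μ.real A - ν.real A| ≤ tvDist μ ν := by
  have hbdd : BddAbove (Set.range fun B : {B : Set S // MeasurableSet B} =>
      |μ.real B - ν.real B|) := by
    refine ⟨μ.real Set.univ + ν.real Set.univ, ?_⟩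
    rintro _ ⟨B, rfl⟩
    have hμB := measureReal_mono (μ := μ) (Set.subset_univ B.1)
    have hνB := measureReal_mono (μ := ν) (Set.subset_univ B.1)
    have hμ0 := measureReal_nonneg (μ := μ) (s := B.1)
    have hν0 := measureReal_nonneg (μ := ν) (s := B.1)
    exact abs_sub_le_iff.2 ⟨by linarith, by linarith⟩
  exact le_ciSup hbdd ⟨A, hA⟩

lemma tvDist_triangle (μ ρ ν : Measure S) [IsFiniteMeasure μ] [IsFiniteMeasure ρ]
    [IsFiniteMeasure ν] : tvDist μ ν ≤ tvDist μ ρ + tvDist ρ ν :=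
  ciSup_le fun A => (abs_sub_le _ _ _).trans (add_le_add (le_tvDist μ ρ A.2) (le_tvDist ρ ν A.2))

/-- The Hahn decomposition `s` of `μ - ν` gives `∫ f ∂μ ≤ ∫ f ∂ν` off `s`, while on `s`,
comparing the integrals of `r - f ≥ 0` gives `∫_s f ∂μ - ∫_s f ∂ν ≤ r (μ s - ν s)`. -/
lemma integral_sub_integral_le_mul_tvDist (μ ν : Measure S) [IsFiniteMeasure μ]
    [IsFiniteMeasure ν] {f : S → ℝ} (hf : Measurable f) {r : ℝ} (hr : 0 ≤ r)
    (hf0 : ∀ x, 0 ≤ f x) (hfr : ∀ x, f x ≤ r) :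
    ∫ x, f x ∂μ - ∫ x, f x ∂ν ≤ r * tvDist μ ν := by
  obtain ⟨s, hs, hνμ, hμν⟩ := hahn_decomposition μ ν
  have hfi (ρ : Measure S) [IsFiniteMeasure ρ] : Integrable f ρ :=
    .of_bound hf.aestronglyMeasurable r
      (ae_of_all _ fun x => (Real.norm_of_nonneg (hf0 x)).trans_le (hfr x))
  have hle_on_s : ν.restrict s ≤ μ.restrict s := Measure.le_iff.2 fun t ht => by
    rw [Measure.restrict_apply ht, Measure.restrict_apply ht]
    exact hνμ _ (ht.inter hs) Set.inter_subset_right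
  have hle_on_sc : μ.restrict sᶜ ≤ ν.restrict sᶜ := Measure.le_iff.2 fun t ht => by
    rw [Measure.restrict_apply ht, Measure.restrict_apply ht]
    exact hμν _ (ht.inter hs.compl) Set.inter_subset_right
  have h_sc : ∫ x in sᶜ, f x ∂μ ≤ ∫ x in sᶜ, f x ∂ν :=
    integral_mono_measure hle_on_sc (ae_of_all _ hf0) (hfi _)
  have h_s : ∫ x in s, r - f x ∂ν ≤ ∫ x in s, r - f x ∂μ :=
    integral_mono_measure hle_on_s (ae_of_all _ fun x => sub_nonneg.2 (hfr x))
      ((integrable_const r).sub (hfi _))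
  rw [integral_sub (integrable_const r) (hfi _), integral_sub (integrable_const r) (hfi _),
    setIntegral_const, setIntegral_const, smul_eq_mul, smul_eq_mul] at h_s
  have h_tv : r * (μ.real s - ν.real s) ≤ r * tvDist μ ν :=
    mul_le_mul_of_nonneg_left ((le_abs_self _).trans (le_tvDist μ ν hs)) hr
  rw [← integral_add_compl hs (hfi μ), ← integral_add_compl hs (hfi ν)]
  linarith

lemma measureReal_bind_apply (μ : Measure S) (κ : Kernel S S) [IsFiniteKernel κ] {A : Set S}
    (hA : MeasurableSet A) : (μ.bind (fun x => κ x)).real A = ∫ x, (κ x).real A ∂μ := by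
  rw [Measure.real, Measure.bind_apply hA κ.aemeasurable,
    ← integral_toReal (κ.measurable_coe hA).aemeasurable (ae_of_all _ fun x => measure_lt_top _ _)]
  rfl

lemma tvDist_bind_le_of_minorization (κ : Kernel S S) [IsMarkovKernel κ] (η : Measure S)
    [IsProbabilityMeasure η] {δ : ℝ} (hδ : δ ∈ Set.Icc 0 1)
    (hmin : ∀ x A, MeasurableSet A → ENNReal.ofReal δ * η A ≤ κ x A)
    (μ ν : Measure S) [IsProbabilityMeasure μ] [IsProbabilityMeasure ν] :
    tvDist (μ.bind (fun x => κ x)) (ν.bind (fun x => κ x)) ≤ (1 - δ) * tvDist μ ν := by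
  have hmin_real : ∀ x A, MeasurableSet A → δ * η.real A ≤ (κ x).real A := fun x A hA => by
    simpa [Measure.real, ENNReal.toReal_mul, ENNReal.toReal_ofReal hδ.1] using
      ENNReal.toReal_mono (measure_ne_top _ _) (hmin x A hA)
  refine ciSup_le fun ⟨A, hA⟩ => ?_
  set f : S → ℝ := fun x => (κ x).real A - δ * η.real A
  have hf : Measurable f := (κ.measurable_coe hA).ennreal_toReal.sub_const _
  have hf0 : ∀ x, 0 ≤ f x := fun x => sub_nonneg.2 (hmin_real x A hA)
  have hf1 : ∀ x, f x ≤ 1 - δ := fun x => by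
    have := hmin_real x Aᶜ hA.compl
    rw [probReal_compl_eq_one_sub hA, probReal_compl_eq_one_sub hA] at this
    simp only [f]
    linarith
  have hbind (m : Measure S) [IsProbabilityMeasure m] :
      (m.bind (fun x => κ x)).real A = ∫ x, f x ∂m + δ * η.real A := by
    rw [measureReal_bind_apply m κ hA, integral_sub _ (integrable_const _), integral_const]
    · simp
    · exact .of_bound (κ.measurable_coe hA).ennreal_toReal.aestronglyMeasurable 1
        (ae_of_all _ fun x => by
          rw [Real.norm_of_nonneg measureReal_nonneg]; exact measureReal_le_one)
  have h1δ : 0 ≤ 1 - δ := sub_nonneg.2 hδ.2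
  show |(μ.bind _).real A - (ν.bind _).real A| ≤ _
  rw [hbind μ, hbind ν, abs_sub_le_iff]
  have hμν := integral_sub_integral_le_mul_tvDist μ ν hf h1δ hf0 hf1
  have hνμ := integral_sub_integral_le_mul_tvDist ν μ hf h1δ hf0 hf1
  rw [tvDist_comm] at hνμ
  constructor <;> linarith

instance isProbabilityMeasure_foldl_bind {t : ℕ} (κ : Fin t → Kernel S S)
    [∀ s, IsMarkovKernel (κ s)] (μ : Measure S) [IsProbabilityMeasure μ] :
    IsProbabilityMeasure ((List.ofFn κ).foldl (fun m k => m.bind (fun x => k x)) μ) := by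
  induction t generalizing μ with
  | zero => simpa
  | succ t ih =>
    rw [List.ofFn_succ, List.foldl_cons]
    exact ih _ _

lemma tvDist_foldl_bind_le {t : ℕ} (κ : Fin t → Kernel S S) [∀ s, IsMarkovKernel (κ s)]
    (π μ : Measure S) [IsProbabilityMeasure μ] {a : ℝ} (ha : 0 ≤ a) (e : Fin t → ℝ)
    (hstep : ∀ s (m : Measure S) [IsProbabilityMeasure m],
      tvDist (m.bind (fun x => κ s x)) π ≤ a * tvDist m π + e s) :
    tvDist ((List.ofFn κ).foldl (fun m k => m.bind (fun x => k x)) μ) π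
      ≤ a ^ t * tvDist μ π + ∑ i : Fin t, a ^ (t - 1 - (i : ℕ)) * e i := by
  induction t with
  | zero => simp
  | succ t ih =>
    have hprefix := ih (fun i => κ i.castSucc) (fun i => e i.castSucc) fun s m _ => hstep _ m
    rw [List.ofFn_succ', List.concat_eq_append, List.foldl_append, List.foldl_cons,
      List.foldl_nil]
    have hpow (i : Fin t) : a * a ^ (t - 1 - (i : ℕ)) = a ^ (t + 1 - 1 - (i : ℕ)) := by
      rw [← pow_succ']
      congr 1
      omega
    calc _ ≤ a * tvDist ((List.ofFn fun i => κ i.castSucc).foldl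
              (fun m k => m.bind (fun x => k x)) μ) π + e (Fin.last t) := hstep _ _
      _ ≤ a * (a ^ t * tvDist μ π + ∑ i : Fin t, a ^ (t - 1 - (i : ℕ)) * e i.castSucc)
            + e (Fin.last t) := by gcongr
      _ = _ := by
        rw [Fin.sum_univ_castSucc, mul_add, Finset.mul_sum]
        simp only [← mul_assoc, hpow, Fin.val_castSucc, Fin.val_last, Nat.add_sub_cancel,
          Nat.sub_self, pow_zero, one_mul]
        ring

end

/-- **Supporting lemma for Theorem 2 (telescoping bound for inhomogeneous chains).** Let
`κ 0, …, κ (t-1)` be Markov kernels each satisfying a Doeblin minorization with a common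
constant `δ ∈ (0,1]`. Then, for any reference probability measure `π` and any initial
probability measure `μ`, the distribution of the inhomogeneous chain after the `t` steps
satisfies
`dTV(μ κ₀ ⋯ κ_{t-1}, π) ≤ (1-δ)^t · dTV(μ, π) + Σ_{i<t} (1-δ)^{t-1-i} · dTV(π κ_i, π)`. -/
theorem inhomogeneous_chain_telescoping_bound
    {S : Type*} [MeasurableSpace S] (t : ℕ)
    (κ : Fin t → Kernel S S) [∀ s, IsMarkovKernel (κ s)]
    (ν : Fin t → Measure S) [∀ s, IsProbabilityMeasure (ν s)]
    (δ : ℝ) (hδ : δ ∈ Set.Ioc (0 : ℝ) 1)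
    (hmin : ∀ s : Fin t, ∀ x : S, ∀ A : Set S, MeasurableSet A →
      ENNReal.ofReal δ * ν s A ≤ κ s x A)
    (π : Measure S) [IsProbabilityMeasure π]
    (μ : Measure S) [IsProbabilityMeasure μ] :
    tvDist ((List.ofFn κ).foldl (fun m k => m.bind (fun x => k x)) μ) π
      ≤ (1 - δ) ^ t * tvDist μ π
        + ∑ i : Fin t, (1 - δ) ^ (t - 1 - (i : ℕ)) * tvDist (π.bind (fun x => κ i x)) π := by
  refine tvDist_foldl_bind_le κ π μ (sub_nonneg.2 hδ.2) _ fun s m _ => ?_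
  calc tvDist (m.bind (fun x => κ s x)) π
      ≤ tvDist (m.bind (fun x => κ s x)) (π.bind (fun x => κ s x))
        + tvDist (π.bind (fun x => κ s x)) π := tvDist_triangle _ _ _
    _ ≤ (1 - δ) * tvDist m π + tvDist (π.bind (fun x => κ s x)) π := by
      gcongr
      exact tvDist_bind_le_of_minorization (κ s) (ν s) (Set.Ioc_subset_Icc_self hδ) (hmin s) m π
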